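/- arXiv:1803.02304 — 3 statements merged into one kernel-verified Lean document; each statement's English description precedes it below -/
import Mathlib

section
/- Let R be a commutative ring, A a commutative R-algebra, and D : A → A a derivation. Then for every natural numbers n and m, every polynomial p ∈ R[x_1, …, x_m], and every a : Fin m → A, the Faà di Bruno recursion for iterated derivatives holds: D^{n+1}(p(a)) = ∑_{k=0}^{n} (n choose k) · ∑_{i=1}^{m} D^k((∂p/∂x_i)(a)) · D^{n-k+1}(a_i). -/
open Finset

private lemma deriv_aeval_eq {R A : Type*} [CommRing R] [CommRing A] [Algebra R A]
    (D : Derivation R A A) {m : ℕ} (p : MvPolynomial (Fin m) R) (a : Fin m → A) :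
    D (MvPolynomial.aeval a p) =
      ∑ i, (MvPolynomial.aeval a (MvPolynomial.pderiv i p)) * D (a i) := by
  induction p using MvPolynomial.induction_on with
  | C r => simp
  | add p q hp hq => simp [hp, hq, Finset.sum_add_distrib, add_mul]
  | mul_X p j hp =>
    simp only [map_mul, MvPolynomial.aeval_X, Derivation.leibniz, smul_eq_mul, hp,
      MvPolynomial.pderiv_mul, MvPolynomial.pderiv_X, map_add, add_mul, Finset.sum_add_distrib,
      Finset.mul_sum]
    congr 1
    · rw [Finset.sum_eq_single j]
      · simp
      · intro i _ hij
        simp [Pi.single_apply, hij]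
      · simp
    · exact Finset.sum_congr rfl fun i _ => (mul_assoc _ _ _).symm

private lemma iterate_deriv_mul {R A : Type*} [CommRing R] [CommRing A] [Algebra R A]
    (D : Derivation R A A) (n : ℕ) (p q : A) :
    (⇑D)^[n] (p * q) =
      ∑ k ∈ range n.succ, (n.choose k • ((⇑D)^[n - k] p * (⇑D)^[k] q)) := by
  induction n with
  | zero => simp [Finset.range]
  | succ n IH =>
    calc
      (⇑D)^[n + 1] (p * q) =
          D (∑ k ∈ range n.succ,
              n.choose k • ((⇑D)^[n - k] p * (⇑D)^[k] q)) := by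
        rw [Function.iterate_succ_apply', IH]
      _ = (∑ k ∈ range n.succ,
            n.choose k • ((⇑D)^[n - k + 1] p * (⇑D)^[k] q)) +
          ∑ k ∈ range n.succ,
            n.choose k • ((⇑D)^[n - k] p * (⇑D)^[k + 1] q) := by
        rw [map_sum, ← sum_add_distrib]
        refine sum_congr rfl fun k _ => ?_
        rw [Derivation.map_smul_of_tower, Derivation.leibniz, smul_eq_mul, smul_eq_mul,
          Function.iterate_succ_apply' D (n - k) p, Function.iterate_succ_apply' D k q,
          smul_add]
        ring_nf
      _ = (∑ k ∈ range n.succ,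
                n.choose k.succ • ((⇑D)^[n - k] p * (⇑D)^[k + 1] q)) +
              1 • ((⇑D)^[n + 1] p * (⇑D)^[0] q) +
            ∑ k ∈ range n.succ, n.choose k • ((⇑D)^[n - k] p * (⇑D)^[k + 1] q) :=
        ?_
      _ = ((∑ k ∈ range n.succ, n.choose k • ((⇑D)^[n - k] p * (⇑D)^[k + 1] q)) +
              ∑ k ∈ range n.succ,
                n.choose k.succ • ((⇑D)^[n - k] p * (⇑D)^[k + 1] q)) +
            1 • ((⇑D)^[n + 1] p * (⇑D)^[0] q) := by
        rw [add_comm, add_assoc]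
      _ = (∑ i ∈ range n.succ,
              (n + 1).choose (i + 1) • ((⇑D)^[n + 1 - (i + 1)] p * (⇑D)^[i + 1] q)) +
            1 • ((⇑D)^[n + 1] p * (⇑D)^[0] q) := by
        simp_rw [Nat.choose_succ_succ, Nat.succ_sub_succ, add_smul, sum_add_distrib]
      _ = ∑ k ∈ range n.succ.succ,
            n.succ.choose k • ((⇑D)^[n.succ - k] p * (⇑D)^[k] q) := by
        rw [sum_range_succ' _ n.succ, Nat.choose_zero_right, tsub_zero]
    congr
    refine (sum_range_succ' _ _).trans (congr_arg₂ (· + ·) ?_ ?_)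
    · rw [sum_range_succ, Nat.choose_succ_self, zero_smul, add_zero]
      refine sum_congr rfl fun k hk => ?_
      rw [mem_range] at hk
      have h : n - (k + 1) + 1 = n - k := by omega
      rw [h]
    · rw [Nat.choose_zero_right, tsub_zero]


private lemma iterate_map_sum {R A : Type*} [CommRing R] [CommRing A] [Algebra R A]
    (D : Derivation R A A) (n : ℕ) {ι : Type*} (s : Finset ι) (f : ι → A) :
    (⇑D)^[n] (∑ i ∈ s, f i) = ∑ i ∈ s, (⇑D)^[n] (f i) := by
  induction n with
  | zero => simp
  | succ n IH =>
    rw [Function.iterate_succ_apply', IH, map_sum]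
    exact sum_congr rfl fun i _ => (Function.iterate_succ_apply' D n (f i)).symm

/-- Faà di Bruno recursion for iterated derivatives of a polynomial evaluation. -/
theorem faa_di_bruno_recursion (R A : Type*) [CommRing R] [CommRing A] [Algebra R A]
    (D : Derivation R A A) (n m : ℕ) (p : MvPolynomial (Fin m) R) (a : Fin m → A) :
    (⇑D)^[n + 1] (MvPolynomial.aeval a p) =
      ∑ k ∈ Finset.range (n + 1), n.choose k •
        ∑ i, (⇑D)^[k] (MvPolynomial.aeval a (MvPolynomial.pderiv i p)) *
          (⇑D)^[n - k + 1] (a i) := by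
  rw [Function.iterate_succ_apply, deriv_aeval_eq, iterate_map_sum]
  simp_rw [iterate_deriv_mul]
  rw [Finset.sum_comm]
  conv_rhs => rw [← Finset.sum_range_reflect]
  refine sum_congr rfl fun k hk => ?_
  rw [mem_range] at hk
  have h1 : n + 1 - 1 - k = n - k := by omega
  have h2 : n - (n - k) = k := by omega
  rw [h1, h2, Nat.choose_symm (by omega : k ≤ n), smul_sum]
  exact sum_congr rfl fun i _ => by rw [Function.iterate_succ_apply]
end

section
/- Let R be a commutative ring, A and B commutative R-algebras, d : B → B a derivation, and φ : B → A an R-algebra homomorphism. Define ψ : B → (ℕ → A) by ψ(b)(n) = φ(d^n(b)). Then ψ(1) = e, ψ(b₁·b₂) = ψ(b₁) ⋆ ψ(b₂) for all b₁, b₂ ∈ B, ψ(b)(0) = φ(b), and ψ(d(b)) = s(ψ(b)) for all b ∈ B. -/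
/-- The Hurwitz product on sequences `ℕ → A`. -/
def hurwitzMul {A : Type*} [CommRing A] (f g : ℕ → A) : ℕ → A :=
  fun n => ∑ k ∈ Finset.range (n + 1), n.choose k • (f k * g (n - k))

/-- The Hurwitz unit sequence. -/
def hurwitzOne (A : Type*) [CommRing A] : ℕ → A :=
  fun n => if n = 0 then 1 else 0

/-- The shift operator on sequences. -/
def shiftSeq {A : Type*} (f : ℕ → A) : ℕ → A :=
  fun n => f (n + 1)

/-- Iterated Leibniz rule for a derivation. -/
lemma iterLeibniz {R B : Type*} [CommRing R] [CommRing B] [Algebra R B]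
    (d : Derivation R B B) (a b : B) (n : ℕ) :
    (⇑d)^[n] (a * b) = ∑ m ∈ Finset.range (n + 1),
      n.choose m • ((⇑d)^[m] a * (⇑d)^[n - m] b) := by
  induction n with
  | zero => simp
  | succ n ih =>
    have step : (⇑d)^[n + 1] (a * b) = ∑ m ∈ Finset.range (n + 1),
        (n.choose m • ((⇑d)^[m + 1] a * (⇑d)^[n - m] b)
          + n.choose m • ((⇑d)^[m] a * (⇑d)^[n - m + 1] b)) := by
      rw [Function.iterate_succ_apply', ih, map_sum]
      refine Finset.sum_congr rfl fun m hm => ?_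
      rw [map_nsmul, Derivation.leibniz, smul_eq_mul, smul_eq_mul,
        ← Function.iterate_succ_apply' d ((n - m)) b,
        ← Function.iterate_succ_apply' d m a, smul_add,
        mul_comm ((⇑d)^[n - m] b), add_comm]
    have h3 : ∑ m ∈ Finset.range (n + 1 + 1),
          (n + 1).choose m • ((⇑d)^[m] a * (⇑d)^[n + 1 - m] b)
        = (∑ i ∈ Finset.range (n + 1), n.choose i • ((⇑d)^[i + 1] a * (⇑d)^[n - i] b))
          + ((∑ i ∈ Finset.range (n + 1),
              n.choose (i + 1) • ((⇑d)^[i + 1] a * (⇑d)^[n - i] b))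
            + (n + 1).choose 0 • ((⇑d)^[0] a * (⇑d)^[n + 1 - 0] b)) := by
      rw [Finset.sum_range_succ']
      have hmid : ∀ i ∈ Finset.range (n + 1),
          (n + 1).choose (i + 1) • ((⇑d)^[i + 1] a * (⇑d)^[n + 1 - (i + 1)] b)
          = n.choose i • ((⇑d)^[i + 1] a * (⇑d)^[n - i] b)
            + n.choose (i + 1) • ((⇑d)^[i + 1] a * (⇑d)^[n - i] b) := by
        intro i _
        rw [Nat.choose_succ_succ, add_smul, Nat.succ_sub_succ]
      rw [Finset.sum_congr rfl hmid, Finset.sum_add_distrib, add_assoc]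
    have h2 : ∑ m ∈ Finset.range (n + 1), n.choose m • ((⇑d)^[m] a * (⇑d)^[n - m + 1] b)
        = (∑ i ∈ Finset.range (n + 1),
            n.choose (i + 1) • ((⇑d)^[i + 1] a * (⇑d)^[n - i] b))
          + (n + 1).choose 0 • ((⇑d)^[0] a * (⇑d)^[n + 1 - 0] b) := by
      rw [Finset.sum_range_succ']
      congr 1
      · rw [Finset.sum_range_succ]
        simp only [Nat.choose_succ_self, zero_smul, add_zero]
        refine Finset.sum_congr rfl fun i hi => ?_
        have : n - (i + 1) + 1 = n - i := by
          have := Finset.mem_range.mp hi; omega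
        rw [this]
      · simp
    rw [step, Finset.sum_add_distrib, h2, h3]

/-- Given a derivation `d` on `B` and an `R`-algebra morphism `φ : B → A`, the map
`ψ(b)(n) = φ(dⁿ(b))` is multiplicative for the Hurwitz product, unital, extends `φ`,
and intertwines `d` with the shift. -/
theorem hurwitz_couniversal_map (R A B : Type*) [CommRing R] [CommRing A] [Algebra R A]
    [CommRing B] [Algebra R B] (d : Derivation R B B) (φ : B →ₐ[R] A)
    (ψ : B → ℕ → A) (hψ : ∀ b n, ψ b n = φ ((⇑d)^[n] b)) :
    ψ 1 = hurwitzOne A ∧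
    (∀ b₁ b₂ : B, ψ (b₁ * b₂) = hurwitzMul (ψ b₁) (ψ b₂)) ∧
    (∀ b : B, ψ b 0 = φ b) ∧
    (∀ b : B, ψ (d b) = shiftSeq (ψ b)) := by
  refine ⟨?_, ?_, ?_, ?_⟩
  · funext n
    rw [hψ, hurwitzOne]
    cases n with
    | zero => simp
    | succ n =>
      rw [Function.iterate_succ_apply, d.map_one_eq_zero,
        Function.iterate_fixed (map_zero d) n]
      simp
  · intro b₁ b₂
    funext n
    rw [hψ, hurwitzMul, iterLeibniz, map_sum]
    refine Finset.sum_congr rfl fun k hk => ?_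
    rw [map_nsmul, map_mul, hψ, hψ]
  · intro b; rw [hψ]; rfl
  · intro b
    funext n
    rw [hψ, shiftSeq, hψ, Function.iterate_succ_apply]
end

section
/- Let R be a commutative ring and X a type. Let D be the R-derivation on the multivariate polynomial ring R[x_{(x,n)} : (x,n) ∈ X × ℕ] determined by D(x_{(x,n)}) = x_{(x,n+1)} on variables. Then for every commutative R-algebra B equipped with a derivation d : B → B and every function f : X → B, there exists a unique R-algebra homomorphism g : R[x_{(x,n)} : (x,n) ∈ X × ℕ] → B such that g(x_{(x,0)}) = f(x) for all x ∈ X and g(D(p)) = d(g(p)) for all polynomials p. -/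
/-- The derivation on `R[x_{(x,n)} : (x,n) ∈ X × ℕ]` with `D(x_{(x,n)}) = x_{(x,n+1)}`. -/
noncomputable def freeDiffDer (R X : Type*) [CommRing R] :
    Derivation R (MvPolynomial (X × ℕ) R) (MvPolynomial (X × ℕ) R) :=
  MvPolynomial.mkDerivation R fun q => MvPolynomial.X (q.1, q.2 + 1)

/-- Universal property of the free differential algebra: for every commutative `R`-algebra `B`
with a derivation `d` and every function `f : X → B`, there is a unique `R`-algebra morphism
`g` from `R[x_{(x,n)}]` to `B` with `g(x_{(x,0)}) = f(x)` commuting with the derivations. -/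
theorem free_differential_algebra_universal (R X : Type*) [CommRing R]
    (B : Type*) [CommRing B] [Algebra R B] (d : Derivation R B B) (f : X → B) :
    ∃! g : MvPolynomial (X × ℕ) R →ₐ[R] B,
      (∀ x : X, g (MvPolynomial.X (x, 0)) = f x) ∧
      ∀ p : MvPolynomial (X × ℕ) R, g (freeDiffDer R X p) = d (g p) := by
  set g : MvPolynomial (X × ℕ) R →ₐ[R] B :=
    MvPolynomial.aeval (fun q : X × ℕ => d^[q.2] (f q.1)) with hg
  have hX : ∀ q : X × ℕ, g (MvPolynomial.X q) = d^[q.2] (f q.1) := fun q => by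
    simp [hg]
  have hD : ∀ p : MvPolynomial (X × ℕ) R, g (freeDiffDer R X p) = d (g p) := by
    intro p
    induction p using MvPolynomial.induction_on with
    | C a =>
        simp [freeDiffDer]
    | add p q hp hq =>
        simp [map_add, hp, hq]
    | mul_X p q hp =>
        have hDX : freeDiffDer R X (MvPolynomial.X q)
            = MvPolynomial.X (q.1, q.2 + 1) := by
          simp [freeDiffDer, MvPolynomial.mkDerivation_X]
        rw [Derivation.leibniz]
        simp only [smul_eq_mul, map_add, map_mul, hDX, hp, hX, map_mul]
        rw [Derivation.leibniz, smul_eq_mul, smul_eq_mul]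
        simp only [Function.iterate_succ_apply']
  refine ⟨g, ⟨fun x => by simpa using hX (x, 0), hD⟩, ?_⟩
  rintro g' ⟨h0, hD'⟩
  ext q
  obtain ⟨x, n⟩ := q
  induction n with
  | zero => simp [h0, hX]
  | succ n ih =>
      have : MvPolynomial.X (σ := X × ℕ) (R := R) (x, n + 1)
          = freeDiffDer R X (MvPolynomial.X (x, n)) := by
        simp [freeDiffDer, MvPolynomial.mkDerivation_X]
      rw [this, hD', hD, ih]
end
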